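/- Let a > 0, M > 0, and η > 0. There exists a constant C > 0 such that for all t > 0: ∫₀^t ∫_{−∞}^0 errfn( (−y − a(t−s))/(M√(t−s)) ) · e^{−η|y|} · (1+s)^{−3/2} dy ds ≤ C (1+t)^{−3/2}. -/

import Mathlib

/-!
Put `τ = t - s` and `c = min (a² / (8M²)) (ηa / 4)`. For `y ≤ 0`, either `|y| ≥ aτ/2`, and then
`e^{-η|y|} ≤ e^{-η|y|/2} e^{-ηaτ/4}`, or `|y| < aτ/2`, and then the argument of `errfn` is at most
`-a√τ / (2M)`, where the Gaussian tail gives `errfn ≤ e^{-a²τ/(8M²)}`. Either way the `y`-integral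
is at most `(2/η) e^{-cτ}`. The remaining convolution `∫₀ᵗ e^{-c(t-s)} (1+s)^{-p} ds` is
`O((1+t)^{-p})`: for `s ≥ t/2` the weight `(1+s)^{-p}` is comparable to `(1+t)^{-p}`, and for
`s < t/2` the factor `e^{-c(t-s)} ≤ e^{-ct/2}` beats every power of `1 + t`.
-/

open MeasureTheory Set

noncomputable def errfn (z : ℝ) : ℝ :=
  (1 / (2 * Real.pi)) * ∫ ξ in Set.Iic z, Real.exp (-ξ^2)

open Real

lemma errfn_nonneg (z : ℝ) : 0 ≤ errfn z :=
  mul_nonneg (by positivity) (setIntegral_nonneg measurableSet_Iic fun _ _ => (exp_pos _).le)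

lemma errfn_le_one (z : ℝ) : errfn z ≤ 1 := by
  have hint : Integrable fun ξ : ℝ => exp (-ξ ^ 2) := by
    simpa using integrable_exp_neg_mul_sq one_pos
  have hle : ∫ ξ in Iic z, exp (-ξ ^ 2) ≤ √π := by
    have := setIntegral_le_integral (s := Iic z) hint
      (.of_forall fun ξ => (exp_pos (-ξ ^ 2)).le)
    simpa using this.trans_eq (by simpa using integral_gaussian 1)
  have hsqrt : √π ≤ 2 * π := by
    have : √π ≤ π := sqrt_le_self_iff.mpr (Or.inr (by linarith [pi_gt_three]))
    linarith [pi_pos]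
  calc errfn z ≤ 1 / (2 * π) * (2 * π) := by unfold errfn; gcongr; exact hle.trans hsqrt
    _ = 1 := by field_simp

lemma errfn_le_exp_neg_sq {z : ℝ} (hz : z ≤ 0) : errfn z ≤ exp (-z ^ 2 / 2) := by
  have hint : Integrable fun ξ : ℝ => exp (-(1 / 2) * ξ ^ 2) :=
    integrable_exp_neg_mul_sq (by norm_num)
  have hint₁ : Integrable fun ξ : ℝ => exp (-ξ ^ 2) := by
    simpa using integrable_exp_neg_mul_sq one_pos
  -- for `ξ ≤ z ≤ 0` we have `ξ² ≥ z²/2 + ξ²/2`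
  have hpt : ∀ ξ ∈ Iic z, exp (-ξ ^ 2) ≤ exp (-z ^ 2 / 2) * exp (-(1 / 2) * ξ ^ 2) := by
    intro ξ hξ
    rw [← exp_add, exp_le_exp]
    nlinarith [mem_Iic.mp hξ]
  have hle : ∫ ξ in Iic z, exp (-(1 / 2) * ξ ^ 2) ≤ √(2 * π) := by
    have := setIntegral_le_integral (s := Iic z) hint
      (.of_forall fun ξ => (exp_pos (-(1 / 2) * ξ ^ 2)).le)
    rwa [integral_gaussian, show π / (1 / 2) = 2 * π by ring] at this
  have hsqrt : √(2 * π) ≤ 2 * π :=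
    sqrt_le_self_iff.mpr (Or.inr (by linarith [pi_gt_three]))
  calc errfn z ≤ 1 / (2 * π) * ∫ ξ in Iic z, exp (-z ^ 2 / 2) * exp (-(1 / 2) * ξ ^ 2) := by
        refine mul_le_mul_of_nonneg_left ?_ (by positivity)
        exact setIntegral_mono_on hint₁.integrableOn
          (hint.const_mul _).integrableOn measurableSet_Iic hpt
    _ = exp (-z ^ 2 / 2) * (1 / (2 * π) * ∫ ξ in Iic z, exp (-(1 / 2) * ξ ^ 2)) := by
        rw [integral_const_mul]; ring
    _ ≤ exp (-z ^ 2 / 2) * (1 / (2 * π) * (2 * π)) := by gcongr; exact hle.trans hsqrt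
    _ = exp (-z ^ 2 / 2) := by field_simp

section Kernel

variable {a M η τ : ℝ}

lemma errfn_mul_exp_le (hM : 0 < M) (hη : 0 < η) (hτ : 0 < τ) {y : ℝ} (hy : y ≤ 0) :
    errfn ((-y - a * τ) / (M * √τ)) * exp (-η * |y|) ≤
      exp (η / 2 * y) * exp (-min (a ^ 2 / (8 * M ^ 2)) (η * a / 4) * τ) := by
  set c := min (a ^ 2 / (8 * M ^ 2)) (η * a / 4)
  have hc₁ : c * (8 * M ^ 2) ≤ a ^ 2 := (le_div_iff₀ (by positivity)).mp (min_le_left _ _)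
  have hc₂ : c ≤ η * a / 4 := min_le_right _ _
  rw [abs_of_nonpos hy]
  rcases le_or_gt (a * τ / 2) (-y) with hfar | hnear
  · calc errfn ((-y - a * τ) / (M * √τ)) * exp (-η * -y) ≤ 1 * exp (-η * -y) := by
          gcongr; exact errfn_le_one _
      _ ≤ exp (η / 2 * y) * exp (-c * τ) := by
          rw [one_mul, ← exp_add, exp_le_exp]; nlinarith
  · have hdecay : exp (-η * -y) ≤ exp (η / 2 * y) := exp_le_exp.mpr (by nlinarith)
    set z := (-y - a * τ) / (M * √τ)
    have hMτ : 0 < M * √τ := by positivity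
    have hz : z * (M * √τ) = -y - a * τ := div_mul_cancel₀ _ hMτ.ne'
    have hz₀ : z ≤ 0 := by nlinarith
    have hz₂ : a ^ 2 * τ ≤ 4 * M ^ 2 * z ^ 2 := by
      have hsq : (z * (M * √τ)) ^ 2 = M ^ 2 * z ^ 2 * τ := by
        rw [mul_pow, mul_pow, sq_sqrt hτ.le]; ring
      have : (a * τ / 2) ^ 2 ≤ (z * (M * √τ)) ^ 2 := by rw [hz]; nlinarith
      nlinarith
    have hcz : c * τ ≤ z ^ 2 / 2 := by
      have : 8 * M ^ 2 * (c * τ) ≤ 8 * M ^ 2 * (z ^ 2 / 2) := by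
        nlinarith [mul_le_mul_of_nonneg_right hc₁ hτ.le]
      exact le_of_mul_le_mul_left this (by positivity)
    calc errfn z * exp (-η * -y) ≤ exp (-z ^ 2 / 2) * exp (η / 2 * y) := by
          gcongr
          exact errfn_le_exp_neg_sq hz₀
      _ ≤ exp (-c * τ) * exp (η / 2 * y) := by gcongr; linarith
      _ = exp (η / 2 * y) * exp (-c * τ) := mul_comm _ _

lemma integral_errfn_mul_exp_le (hM : 0 < M) (hη : 0 < η) (hτ : 0 < τ) :
    ∫ y in Iic 0, errfn ((-y - a * τ) / (M * √τ)) * exp (-η * |y|) ≤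
      2 / η * exp (-min (a ^ 2 / (8 * M ^ 2)) (η * a / 4) * τ) := by
  set c := min (a ^ 2 / (8 * M ^ 2)) (η * a / 4)
  have hbound : IntegrableOn (fun y => exp (η / 2 * y) * exp (-c * τ)) (Iic 0) :=
    (integrableOn_exp_mul_Iic (by positivity) 0).mul_const _
  calc ∫ y in Iic 0, errfn ((-y - a * τ) / (M * √τ)) * exp (-η * |y|)
      ≤ ∫ y in Iic 0, exp (η / 2 * y) * exp (-c * τ) := by
        refine integral_mono_of_nonneg
          (.of_forall fun y => mul_nonneg (errfn_nonneg _) (exp_pos _).le) hbound ?_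
        filter_upwards [ae_restrict_mem measurableSet_Iic] with y hy
        exact errfn_mul_exp_le hM hη hτ hy
    _ = 2 / η * exp (-c * τ) := by
        rw [integral_mul_const, integral_exp_mul_Iic (by positivity)]
        field_simp
        simp

end Kernel

section Convolution

variable {p c : ℝ}

lemma integral_exp_neg_mul_sub_Iic (hc : 0 < c) (t : ℝ) :
    ∫ s in Iic t, exp (-c * (t - s)) = 1 / c := by
  have h (s : ℝ) : exp (-c * (t - s)) = exp (c * s) * exp (-c * t) := by
    rw [← exp_add]; ring_nf
  simp_rw [h]
  rw [integral_mul_const, integral_exp_mul_Iic hc, div_mul_eq_mul_div, ← exp_add]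
  simp

lemma integrableOn_exp_neg_mul_sub_Iic (hc : 0 < c) (t : ℝ) :
    IntegrableOn (fun s => exp (-c * (t - s))) (Iic t) :=
  .of_integral_ne_zero <| by rw [integral_exp_neg_mul_sub_Iic hc]; positivity

lemma one_add_rpow_le_mul_exp (hp : 0 ≤ p) (hc : 0 < c) :
    ∃ D > 0, ∀ t, 0 ≤ t → (1 + t) ^ p ≤ D * exp (c * t) := by
  set ε := c / (p + 1)
  have hε : 0 < ε := by positivity
  have hεp : ε * p ≤ c := by
    rw [div_mul_eq_mul_div, div_le_iff₀ (by positivity)]; nlinarith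
  set m := max 1 ε⁻¹
  refine ⟨m ^ p, by positivity, fun t ht => ?_⟩
  have hlin : 1 + t ≤ m * exp (ε * t) := by
    have hmε : 1 ≤ m * ε := by
      rw [← inv_mul_cancel₀ hε.ne']; gcongr; exact le_max_right _ _
    calc 1 + t ≤ m * (1 + ε * t) := by nlinarith [le_max_left 1 ε⁻¹]
      _ ≤ m * exp (ε * t) := by gcongr; linarith [add_one_le_exp (ε * t)]
  calc (1 + t) ^ p ≤ (m * exp (ε * t)) ^ p := by gcongr
    _ = m ^ p * exp (ε * p * t) := by
        rw [mul_rpow (by positivity) (exp_pos _).le, ← exp_mul]; ring_nf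
    _ ≤ m ^ p * exp (c * t) := by gcongr

lemma exp_neg_mul_le_mul_one_add_rpow_neg (hp : 0 ≤ p) (hc : 0 < c) :
    ∃ D > 0, ∀ t, 0 ≤ t → exp (-c * t) ≤ D * (1 + t) ^ (-p) := by
  obtain ⟨D, hD, hgrowth⟩ := one_add_rpow_le_mul_exp hp hc
  refine ⟨D, hD, fun t ht => ?_⟩
  have h1t : 0 < (1 + t) ^ p := rpow_pos_of_pos (by linarith) p
  rw [rpow_neg (by linarith), neg_mul, exp_neg, ← div_eq_mul_inv, le_div_iff₀ h1t,
    inv_mul_le_iff₀ (exp_pos _), mul_comm]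
  exact hgrowth t ht

lemma exp_neg_mul_sub_mul_rpow_le (hp : 0 ≤ p) (hc : 0 < c) :
    ∃ D > 0, ∀ s t, 0 ≤ s → s ≤ t →
      exp (-c * (t - s)) * (1 + s) ^ (-p) ≤ D * (1 + t) ^ (-p) * exp (-(c / 2) * (t - s)) := by
  obtain ⟨D, hD, hdecay⟩ := exp_neg_mul_le_mul_one_add_rpow_neg hp (by positivity : 0 < c / 4)
  refine ⟨2 ^ p + D, by positivity, fun s t hs hst => ?_⟩
  have hpt : 0 ≤ (1 + t) ^ (-p) := rpow_nonneg (by linarith) _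
  have hhalf : 0 ≤ exp (-(c / 2) * (t - s)) := (exp_pos _).le
  rcases le_or_gt t (2 * s) with hlate | hearly
  · have hexp : exp (-c * (t - s)) ≤ exp (-(c / 2) * (t - s)) := by gcongr; nlinarith
    have hs' : (1 + s) ^ (-p) ≤ 2 ^ p * (1 + t) ^ (-p) := by
      calc (1 + s) ^ (-p) ≤ ((1 + t) / 2) ^ (-p) :=
            rpow_le_rpow_of_nonpos (by linarith) (by linarith) (by linarith)
        _ = 2 ^ p * (1 + t) ^ (-p) := by
            rw [div_rpow (by linarith) zero_le_two, rpow_neg zero_le_two]; field_simp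
    calc exp (-c * (t - s)) * (1 + s) ^ (-p)
        ≤ exp (-(c / 2) * (t - s)) * (2 ^ p * (1 + t) ^ (-p)) := by gcongr
      _ ≤ (2 ^ p + D) * (1 + t) ^ (-p) * exp (-(c / 2) * (t - s)) := by
        nlinarith [mul_nonneg (mul_nonneg hD.le hpt) hhalf]
  · have hs' : (1 + s) ^ (-p) ≤ 1 :=
      rpow_le_one_of_one_le_of_nonpos (by linarith) (by linarith)
    have hsplit : exp (-c * (t - s)) ≤ exp (-(c / 4) * t) * exp (-(c / 2) * (t - s)) := by
      rw [← exp_add]; gcongr; nlinarith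
    calc exp (-c * (t - s)) * (1 + s) ^ (-p)
        ≤ exp (-(c / 4) * t) * exp (-(c / 2) * (t - s)) := by
          nlinarith [exp_pos (-c * (t - s))]
      _ ≤ D * (1 + t) ^ (-p) * exp (-(c / 2) * (t - s)) := by
          gcongr; exact hdecay t (by linarith)
      _ ≤ (2 ^ p + D) * (1 + t) ^ (-p) * exp (-(c / 2) * (t - s)) := by
          gcongr; exact le_add_of_nonneg_left (by positivity)

lemma integrableOn_exp_neg_mul_sub_mul_rpow (p c t : ℝ) :
    IntegrableOn (fun s => exp (-c * (t - s)) * (1 + s) ^ (-p)) (Ioo 0 t) := by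
  refine (ContinuousOn.integrableOn_Icc ?_).mono_set Ioo_subset_Icc_self
  refine (by fun_prop : Continuous fun s => exp (-c * (t - s))).continuousOn.mul ?_
  exact (by fun_prop : Continuous fun s : ℝ => 1 + s).continuousOn.rpow_const
    fun s hs => Or.inl (by linarith [hs.1])

lemma integral_exp_neg_mul_sub_mul_rpow_le (hp : 0 ≤ p) (hc : 0 < c) :
    ∃ C > 0, ∀ t, 0 ≤ t →
      ∫ s in Ioo 0 t, exp (-c * (t - s)) * (1 + s) ^ (-p) ≤ C * (1 + t) ^ (-p) := by
  obtain ⟨D, hD, hpoint⟩ := exp_neg_mul_sub_mul_rpow_le hp hc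
  have hc₂ : 0 < c / 2 := by positivity
  refine ⟨D * (1 / (c / 2)), by positivity, fun t ht => ?_⟩
  have hpt : 0 ≤ (1 + t) ^ (-p) := rpow_nonneg (by linarith) _
  have hsub : Ioo 0 t ⊆ Iic t := Ioo_subset_Iio_self.trans Iio_subset_Iic_self
  have hint : IntegrableOn (fun s => D * (1 + t) ^ (-p) * exp (-(c / 2) * (t - s))) (Iic t) :=
    (integrableOn_exp_neg_mul_sub_Iic hc₂ t).const_mul _
  calc ∫ s in Ioo 0 t, exp (-c * (t - s)) * (1 + s) ^ (-p)
      ≤ ∫ s in Ioo 0 t, D * (1 + t) ^ (-p) * exp (-(c / 2) * (t - s)) := by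
        refine integral_mono_of_nonneg ?_ (hint.mono_set hsub) ?_
        all_goals filter_upwards [ae_restrict_mem measurableSet_Ioo] with s hs
        · exact mul_nonneg (exp_pos _).le (rpow_nonneg (by linarith [hs.1]) _)
        · exact hpoint s t hs.1.le hs.2.le
    _ ≤ ∫ s in Iic t, D * (1 + t) ^ (-p) * exp (-(c / 2) * (t - s)) :=
        setIntegral_mono_set hint
          (.of_forall fun _ => mul_nonneg (mul_nonneg hD.le hpt) (exp_pos _).le)
          hsub.eventuallyLE
    _ = D * (1 / (c / 2)) * (1 + t) ^ (-p) := by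
        rw [integral_const_mul, integral_exp_neg_mul_sub_Iic hc₂]; ring

end Convolution

theorem errfn_excited_estimate (a M η : ℝ)
    (ha : 0 < a) (hM : 0 < M) (hη : 0 < η) :
    ∃ C > 0, ∀ t : ℝ, 0 < t →
      (∫ s in Set.Ioo (0:ℝ) t, ∫ y in Set.Iic (0:ℝ),
          errfn ((-y - a*(t-s)) / (M * Real.sqrt (t-s))) *
            Real.exp (-η * |y|) * (1 + s) ^ (-(3/2:ℝ))) ≤
        C * (1 + t) ^ (-(3/2:ℝ)) := by
  set c := min (a ^ 2 / (8 * M ^ 2)) (η * a / 4)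
  obtain ⟨C, hC, hconv⟩ :=
    integral_exp_neg_mul_sub_mul_rpow_le (p := 3 / 2) (by norm_num) (by positivity : 0 < c)
  refine ⟨2 / η * C, by positivity, fun t ht => ?_⟩
  simp_rw [integral_mul_const]
  calc ∫ s in Ioo 0 t, (∫ y in Iic 0, errfn ((-y - a * (t - s)) / (M * √(t - s))) *
          exp (-η * |y|)) * (1 + s) ^ (-(3 / 2 : ℝ))
      ≤ ∫ s in Ioo 0 t, 2 / η * (exp (-c * (t - s)) * (1 + s) ^ (-(3 / 2 : ℝ))) := by
        refine integral_mono_of_nonneg ?_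
          ((integrableOn_exp_neg_mul_sub_mul_rpow _ c t).const_mul _) ?_
        all_goals filter_upwards [ae_restrict_mem measurableSet_Ioo] with s ⟨hs, hst⟩
        · exact mul_nonneg (setIntegral_nonneg measurableSet_Iic fun y _ =>
            mul_nonneg (errfn_nonneg _) (exp_pos _).le) (rpow_nonneg (by linarith) _)
        · rw [← mul_assoc]
          exact mul_le_mul_of_nonneg_right (integral_errfn_mul_exp_le hM hη (by linarith))
            (rpow_nonneg (by linarith) _)
    _ ≤ 2 / η * C * (1 + t) ^ (-(3 / 2 : ℝ)) := by
        rw [integral_const_mul, mul_assoc]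
        gcongr
        exact hconv t ht.le
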